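/- arXiv:2011.00371 — 3 statements merged into one kernel-verified Lean document; each statement's English description precedes it below -/
import Mathlib

section
/- Let I be a finite set and B, C two C*-algebras. If E_B : I × I → B* is an (I,B)-Schur kernel and E_C : I × I → C* is an (I,C)-Schur kernel, then the pointwise tensor product kernel (j,i) ↦ E_{B;j,i} ⊗ E_{C;j,i}, viewed as a map into (B ⊗ C)*, is an (I, B ⊗ C)-Schur kernel. -/
open scoped ComplexOrder TensorProduct
open Finset

/-- Schur kernel property for a family of continuous linear functionals. -/
def IsSchurKernel {I B : Type*} [Fintype I] [NormedRing B] [StarRing B]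
    [NormedAlgebra ℂ B] (E : I → I → (B →L[ℂ] ℂ)) : Prop :=
  ∀ (n : ℕ) (b : Fin n → B) (z : I × Fin n → ℂ),
    0 ≤ ∑ p : I × Fin n, ∑ q : I × Fin n,
      (starRingEnd ℂ) (z p) * E p.1 q.1 (star (b p.2) * b q.2) * z q

/-- The tensor product functional `φ ⊗ ψ` on `B ⊗[ℂ] C`, determined by
`(φ ⊗ ψ)(b ⊗ c) = φ(b) ψ(c)`. -/
noncomputable def tensorFunctional {B C : Type*} [NormedRing B] [NormedAlgebra ℂ B]
    [NormedRing C] [NormedAlgebra ℂ C] (φ : B →L[ℂ] ℂ) (ψ : C →L[ℂ] ℂ) :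
    B ⊗[ℂ] C →ₗ[ℂ] ℂ :=
  (TensorProduct.lid ℂ ℂ).toLinearMap ∘ₗ
    TensorProduct.map (φ : B →ₗ[ℂ] ℂ) (ψ : C →ₗ[ℂ] ℂ)

/-!
Being a Schur kernel means that for every finite family `b` the complex matrix
`((i, h), (j, k)) ↦ E i j (b_h* b_k)` is positive semidefinite; any finite index type can be used
for the family, not only `Fin n`. For `X_h = Σ_m b_{h,m} ⊗ c_{h,m}`, the quadratic form of the
tensor kernel at `z` is the quadratic form, at `(i, h, m) ↦ z (i, h)`, of the entrywise product
of the matrices of `E_B` and `E_C` on the families `(b_{h,m})` and `(c_{h,m})` indexed by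
`(h, m)`. That product is positive semidefinite by the Schur product theorem.
-/

open Matrix in
theorem Matrix.posSemidef_of_forall_dotProduct_mulVec_nonneg {n : Type*} [Fintype n]
    {A : Matrix n n ℂ} (hA : ∀ x, 0 ≤ star x ⬝ᵥ (A *ᵥ x)) : A.PosSemidef := by
  classical
  rw [← isPositive_toEuclideanLin_iff, LinearMap.isPositive_iff_complex]
  intro x
  have hx := hA x
  rw [EuclideanSpace.inner_eq_star_dotProduct, ofLp_toLpLin, toLin'_apply, dotProduct_star,
    dotProduct_comm (A *ᵥ _), (IsSelfAdjoint.of_nonneg hx).star_eq]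
  exact ⟨Complex.conj_eq_iff_re.mp (IsSelfAdjoint.of_nonneg hx), (Complex.nonneg_iff.mp hx).1⟩

theorem IsSchurKernel.posSemidef {I B ι : Type*} [Fintype I] [NormedRing B] [StarRing B]
    [NormedAlgebra ℂ B] [Fintype ι] {E : I → I → (B →L[ℂ] ℂ)} (hE : IsSchurKernel E)
    (b : ι → B) : (Matrix.of fun p q : I × ι => E p.1 q.1 (star (b p.2) * b q.2)).PosSemidef := by
  refine Matrix.posSemidef_of_forall_dotProduct_mulVec_nonneg fun x => ?_
  let σ : I × ι ≃ I × Fin (Fintype.card ι) := (Equiv.refl I).prodCongr (Fintype.equivFin ι)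
  refine (hE _ (b ∘ (Fintype.equivFin ι).symm) (x ∘ σ.symm)).trans_eq ?_
  simp only [dotProduct, Matrix.mulVec, Finset.mul_sum]
  refine Fintype.sum_equiv σ.symm _ _ fun p => Fintype.sum_equiv σ.symm _ _ fun q => ?_
  simp [σ, mul_assoc]

theorem tensorFunctional_tmul {B C : Type*} [NormedRing B] [NormedAlgebra ℂ B]
    [NormedRing C] [NormedAlgebra ℂ C] (φ : B →L[ℂ] ℂ) (ψ : C →L[ℂ] ℂ) (b : B) (c : C) :
    tensorFunctional φ ψ (b ⊗ₜ[ℂ] c) = φ b * ψ c := by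
  simp [tensorFunctional]

theorem tensorProduct_isSchurKernel_general {I B C : Type*} [Fintype I]
    [NormedRing B] [StarRing B] [NormedAlgebra ℂ B]
    [NormedRing C] [StarRing C] [NormedAlgebra ℂ C]
    (EB : I → I → (B →L[ℂ] ℂ)) (EC : I → I → (C →L[ℂ] ℂ))
    (hEB : IsSchurKernel EB) (hEC : IsSchurKernel EC) :
    ∀ (n N : ℕ) (bb : Fin n → Fin N → B) (cc : Fin n → Fin N → C)
      (z : I × Fin n → ℂ),
      0 ≤ ∑ p : I × Fin n, ∑ q : I × Fin n,
        (starRingEnd ℂ) (z p) *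
          tensorFunctional (EB p.1 q.1) (EC p.1 q.1)
            (∑ m' : Fin N, ∑ m : Fin N,
              (star (bb p.2 m') * bb q.2 m) ⊗ₜ[ℂ] (star (cc p.2 m') * cc q.2 m)) *
          z q := by
  intro n N bb cc z
  have hM := (hEB.posSemidef fun r : Fin n × Fin N => bb r.1 r.2).hadamard
    (hEC.posSemidef fun r : Fin n × Fin N => cc r.1 r.2)
  refine (hM.dotProduct_mulVec_nonneg fun r => z (r.1, r.2.1)).trans_eq ?_
  simp only [dotProduct, Matrix.mulVec, Matrix.hadamard_apply, Matrix.of_apply, Finset.mul_sum,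
    map_sum, tensorFunctional_tmul, Finset.sum_mul, Fintype.sum_prod_type]
  refine Finset.sum_congr rfl fun i _ => Finset.sum_congr rfl fun h _ => ?_
  -- move `∑ m'` in front of `∑ j, ∑ k`
  rw [Finset.sum_comm]
  refine Finset.sum_congr rfl fun j _ => ?_
  rw [Finset.sum_comm]
  refine Finset.sum_congr rfl fun k _ => Finset.sum_congr rfl fun m' _ =>
    Finset.sum_congr rfl fun m _ => ?_
  simp only [Pi.star_apply, Complex.star_def, mul_assoc]

/-- the pointwise tensor product of an `(I,B)`-Schur kernel and an
`(I,C)`-Schur kernel is an `(I, B ⊗ C)`-Schur kernel.  The elements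
`X_h = Σ_m b_{h,m} ⊗ c_{h,m}` of `B ⊗ C` are given via their elementary-tensor
decompositions, and `X_h* X_k = Σ_{m',m} (b_{h,m'}* b_{k,m}) ⊗ (c_{h,m'}* c_{k,m})`. -/
theorem tensorProduct_isSchurKernel {I B C : Type*} [Fintype I]
    [NormedRing B] [StarRing B] [CStarRing B] [NormedAlgebra ℂ B] [StarModule ℂ B]
    [NormedRing C] [StarRing C] [CStarRing C] [NormedAlgebra ℂ C] [StarModule ℂ C]
    (EB : I → I → (B →L[ℂ] ℂ)) (EC : I → I → (C →L[ℂ] ℂ))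
    (hEB : IsSchurKernel EB) (hEC : IsSchurKernel EC) :
    ∀ (n N : ℕ) (bb : Fin n → Fin N → B) (cc : Fin n → Fin N → C)
      (z : I × Fin n → ℂ),
      0 ≤ ∑ p : I × Fin n, ∑ q : I × Fin n,
        (starRingEnd ℂ) (z p) *
          tensorFunctional (EB p.1 q.1) (EC p.1 q.1)
            (∑ m' : Fin N, ∑ m : Fin N,
              (star (bb p.2 m') * bb q.2 m) ⊗ₜ[ℂ] (star (cc p.2 m') * cc q.2 m)) *
          z q :=
  tensorProduct_isSchurKernel_general EB EC hEB hEC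
end

section
/- Let H be a Hilbert space, p ≥ 2, c ∈ ℝ, and (e_j)_{1≤j≤p} an orthonormal family in H. Define real numbers α_1 := c and α_j := c − (α_1² + ⋯ + α_{j−1}²) for 2 ≤ j ≤ p−1, and set h_1 := e_1 and h_j := α_1 e_1 + ⋯ + α_{j−1} e_{j−1} + e_j for 2 ≤ j ≤ p. Then ⟨h_i, h_j⟩ = c for all i ≠ j, and the family (h_j)_{1≤j≤p} is linearly independent. -/
open Finset
open scoped InnerProductSpace

/-!
The pairing `⟪e_j, h_i⟫` is unitriangular: `α_j` for `j < i`, `1` for `j = i`, `0` for `j > i`.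
Hence `⟪h_i, h_j⟫ = α_1² + ⋯ + α_{i-1}² + α_i` for `i < j`, which the recursion defining `α`
makes equal to `c`; and the matrix `(⟪e_j, h_i⟫)` has determinant `1`, so the `h_i` are
linearly independent.
-/

theorem linearIndependent_of_lowerTriangular_pairing {R M ι : Type*} [CommRing R]
    [AddCommGroup M] [Module R M] [Fintype ι] [LinearOrder ι] (v : ι → M)
    (φ : ι → M →ₗ[R] R) (h_lt : ∀ i j, i < j → φ j (v i) = 0)
    (h_diag : ∀ i, IsUnit (φ i (v i))) : LinearIndependent R v := by
  let A : Matrix ι ι R := .of fun i j => φ j (v i)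
  have hA : A.IsLowerTriangular := fun i j hij => h_lt i j hij
  have hdet : IsUnit A.det := by
    rw [Matrix.det_of_isLowerTriangular A hA]
    exact IsUnit.prod_univ_iff.mpr h_diag
  have hrows : LinearIndependent R (LinearMap.pi φ ∘ v) :=
    Matrix.linearIndependent_rows_of_isUnit ((Matrix.isUnit_iff_isUnit_det A).mpr hdet)
  exact hrows.of_comp

section UnitriangularFamily

variable {𝕜 E : Type*} [RCLike 𝕜] [NormedAddCommGroup E] [InnerProductSpace 𝕜 E] {p : ℕ}
  {e : ℕ → E} {a : ℕ → 𝕜} {h : ℕ → E}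

theorem inner_eq_ite_of_unitriangular
    (he : ∀ i ∈ Icc 1 p, ∀ j ∈ Icc 1 p, ⟪e i, e j⟫_𝕜 = if i = j then 1 else 0)
    (hh : ∀ j ∈ Icc 1 p, h j = (∑ k ∈ Ico 1 j, a k • e k) + e j)
    {i j : ℕ} (hj : j ∈ Icc 1 p) (hi : i ∈ Icc 1 p) :
    ⟪e j, h i⟫_𝕜 = if j < i then a j else if j = i then 1 else 0 := by
  have hsum : ∀ k ∈ Ico 1 i, ⟪e j, a k • e k⟫_𝕜 = if j = k then a k else 0 := by
    intro k hk
    rw [inner_smul_right, he j hj k (by grind)]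
    split_ifs <;> simp
  rw [hh i hi, inner_add_right, inner_sum, sum_congr rfl hsum, sum_ite_eq, he j hj i hi]
  grind

theorem inner_eq_sum_add_of_unitriangular
    (he : ∀ i ∈ Icc 1 p, ∀ j ∈ Icc 1 p, ⟪e i, e j⟫_𝕜 = if i = j then 1 else 0)
    (hh : ∀ j ∈ Icc 1 p, h j = (∑ k ∈ Ico 1 j, a k • e k) + e j)
    {i j : ℕ} (hi : i ∈ Icc 1 p) (hj : j ∈ Icc 1 p) (hij : i < j) :
    ⟪h i, h j⟫_𝕜 = (∑ k ∈ Ico 1 i, starRingEnd 𝕜 (a k) * a k) + a i := by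
  have hsum : ∀ k ∈ Ico 1 i, ⟪a k • e k, h j⟫_𝕜 = starRingEnd 𝕜 (a k) * a k := by
    intro k hk
    rw [inner_smul_left, inner_eq_ite_of_unitriangular he hh (by grind) hj, if_pos (by grind)]
  rw [hh i hi, inner_add_left, sum_inner, sum_congr rfl hsum,
    inner_eq_ite_of_unitriangular he hh hi hj, if_pos hij]

end UnitriangularFamily

theorem sum_sq_add_eq_of_recursion {p : ℕ} {c : ℝ} {α : ℕ → ℝ} (hα1 : α 1 = c)
    (hαj : ∀ j, 2 ≤ j → j ≤ p - 1 → α j = c - ∑ k ∈ Ico 1 j, α k ^ 2) {i : ℕ}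
    (hi1 : 1 ≤ i) (hip : i ≤ p - 1) : ∑ k ∈ Ico 1 i, α k ^ 2 + α i = c := by
  rcases hi1.eq_or_lt with rfl | hi2
  · simp [hα1]
  · rw [hαj i hi2 hip]
    ring

theorem offdiagonal_constant_construction_general {H : Type*} [NormedAddCommGroup H]
    [InnerProductSpace ℂ H] (p : ℕ) (c : ℝ) (e : ℕ → H)
    (he : ∀ i ∈ Finset.Icc 1 p, ∀ j ∈ Finset.Icc 1 p,
      ⟪e i, e j⟫_ℂ = if i = j then 1 else 0)
    (α : ℕ → ℝ) (hα1 : α 1 = c)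
    (hαj : ∀ j, 2 ≤ j → j ≤ p - 1 → α j = c - ∑ k ∈ Finset.Ico 1 j, (α k) ^ 2)
    (h : ℕ → H)
    (hh : ∀ j ∈ Finset.Icc 1 p,
      h j = (∑ k ∈ Finset.Ico 1 j, (α k : ℂ) • e k) + e j) :
    (∀ i ∈ Finset.Icc 1 p, ∀ j ∈ Finset.Icc 1 p, i ≠ j → ⟪h i, h j⟫_ℂ = (c : ℂ)) ∧
    LinearIndependent ℂ (fun j : Fin p => h (j.val + 1)) := by
  have inner_of_lt : ∀ i ∈ Icc 1 p, ∀ j ∈ Icc 1 p, i < j → ⟪h i, h j⟫_ℂ = (c : ℂ) := by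
    intro i hi j hj hij
    rw [inner_eq_sum_add_of_unitriangular he hh hi hj hij,
      ← sum_sq_add_eq_of_recursion hα1 hαj (mem_Icc.mp hi).1 (by grind)]
    simp [sq]
  have inner_e_h : ∀ i j : Fin p, innerₛₗ ℂ (e (j.val + 1)) (h (i.val + 1)) =
      if j.val < i.val then (α (j.val + 1) : ℂ) else if j = i then 1 else 0 := fun i j => by
    rw [innerₛₗ_apply_apply, inner_eq_ite_of_unitriangular he hh (by grind) (by grind)]
    simp [Fin.ext_iff]
  refine ⟨fun i hi j hj hne => ?_, ?_⟩
  · rcases hne.lt_or_gt with hij | hji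
    · exact inner_of_lt i hi j hj hij
    · rw [← inner_conj_symm, inner_of_lt j hj i hi hji, Complex.conj_ofReal]
  · refine linearIndependent_of_lowerTriangular_pairing _ (fun j => innerₛₗ ℂ (e (j.val + 1)))
      (fun i j hij => ?_) (fun i => ?_)
    · rw [inner_e_h, if_neg (by grind), if_neg hij.ne']
    · simp [inner_e_h]

/-- with `α₁ = c`, `α_j = c − (α₁² + ⋯ + α_{j−1}²)` for `2 ≤ j ≤ p−1`, and
`h_j := α₁ e₁ + ⋯ + α_{j−1} e_{j−1} + e_j` built from an orthonormal family
`(e_j)_{1 ≤ j ≤ p}`, one has `⟨h_i, h_j⟩ = c` for `i ≠ j`, and `(h_j)_{1 ≤ j ≤ p}` is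
linearly independent. -/
theorem offdiagonal_constant_construction {H : Type*} [NormedAddCommGroup H]
    [InnerProductSpace ℂ H] (p : ℕ) (hp : 2 ≤ p) (c : ℝ) (e : ℕ → H)
    (he : ∀ i ∈ Finset.Icc 1 p, ∀ j ∈ Finset.Icc 1 p,
      ⟪e i, e j⟫_ℂ = if i = j then 1 else 0)
    (α : ℕ → ℝ) (hα1 : α 1 = c)
    (hαj : ∀ j, 2 ≤ j → j ≤ p - 1 → α j = c - ∑ k ∈ Finset.Ico 1 j, (α k) ^ 2)
    (h : ℕ → H)
    (hh : ∀ j ∈ Finset.Icc 1 p,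
      h j = (∑ k ∈ Finset.Ico 1 j, (α k : ℂ) • e k) + e j) :
    (∀ i ∈ Finset.Icc 1 p, ∀ j ∈ Finset.Icc 1 p, i ≠ j → ⟪h i, h j⟫_ℂ = (c : ℂ)) ∧
    LinearIndependent ℂ (fun j : Fin p => h (j.val + 1)) :=
  offdiagonal_constant_construction_general p c e he α hα1 hαj h hh
end

section
/- Let I be a finite set and for every finite Λ ⊆ V let β_{Λᶜ} = (β_{Λᶜ;i,j})_{i,j∈I} be a positive semidefinite matrix such that β_{Λᶜ;i,j} · Π_{x∈Λ∖Λ₀} Tr(h_{x,i}h_{x,j}*) = β_{Λ₀ᶜ;i,j} whenever Λ₀ ⊆ Λ. Then the linear functionals ψ̂_Λ(⊗_{x∈Λ} b_x) := Σ_{i,j∈I} Π_{x∈Λ} Tr(h_{x,i}h_{x,j}* b_x) · β_{Λᶜ;i,j} are positive on B(⊗_{x∈Λ}H_x) and form a projective family: ψ̂_Λ(b_{Λ₀} ⊗ 1_{Λ∖Λ₀}) = ψ̂_{Λ₀}(b_{Λ₀}) for all Λ₀ ⊆ Λ. -/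
open Finset Matrix
open scoped ComplexOrder

variable {V I : Type*}

/-- The operator `⊗_{x∈Λ} h_{x,i} h_{x,j}*` in the concrete model. -/
noncomputable def prodRankOne [DecidableEq V] (d : V → ℕ)
    (h : (x : V) → I → (Fin (d x) → ℂ)) (Λ : Finset V) (i j : I) :
    Matrix ((x : {y // y ∈ Λ}) → Fin (d x.1)) ((x : {y // y ∈ Λ}) → Fin (d x.1)) ℂ :=
  Matrix.of fun f g => ∏ x : {y // y ∈ Λ}, (h x.1 i (f x) * (starRingEnd ℂ) (h x.1 j (g x)))

/-- The product operator `⊗_{x∈Λ} b_x` in the concrete model. -/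
noncomputable def prodOp [DecidableEq V] (d : V → ℕ) (Λ : Finset V)
    (b : (x : V) → Matrix (Fin (d x)) (Fin (d x)) ℂ) :
    Matrix ((x : {y // y ∈ Λ}) → Fin (d x.1)) ((x : {y // y ∈ Λ}) → Fin (d x.1)) ℂ :=
  Matrix.of fun f g => ∏ x : {y // y ∈ Λ}, b x.1 (f x) (g x)

/-- The functional `ψ̂_Λ(B) := Σ_{i,j} β_{Λᶜ;i,j} Tr((⊗_x h_{x,i}h_{x,j}*) B)`. -/
noncomputable def psiHat [DecidableEq V] [Fintype I] (d : V → ℕ)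
    (h : (x : V) → I → (Fin (d x) → ℂ)) (β : Finset V → I → I → ℂ) (Λ : Finset V)
    (B : Matrix ((x : {y // y ∈ Λ}) → Fin (d x.1)) ((x : {y // y ∈ Λ}) → Fin (d x.1)) ℂ) :
    ℂ :=
  ∑ i : I, ∑ j : I, β Λ i j * (prodRankOne d h Λ i j * B).trace

/-!
With `v_i := ⊗_{x∈Λ} h_{x,i}`, the functional is `ψ̂_Λ(B) = Σ_{i,j} β_{ij} ⟨v_j, B v_i⟩`, the sum of
all entries of the Hadamard product of `β_{Λᶜ}` with the transposed Gram matrix `(⟨v_j, B v_i⟩)_{ij}`;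
for `B ≥ 0` both factors are positive semidefinite, hence so is the product (Schur), and its entry
sum is nonnegative. On product operators the trace factorises over the sites, and the sites of
`Λ \ Λ₀`, where `b_x = 1`, contribute exactly the factor `Π_x Tr(h_{x,i}h_{x,j}*)` that the
compatibility condition absorbs into `β`.
-/

namespace Matrix

section piKronecker

variable {ι R : Type*} [Fintype ι] [CommSemiring R] {l m n : ι → Type*}

def piKronecker (A : ∀ x, Matrix (m x) (n x) R) : Matrix (∀ x, m x) (∀ x, n x) R :=
  of fun f g => ∏ x, A x (f x) (g x)

theorem piKronecker_mul [DecidableEq ι] [∀ x, Fintype (m x)]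
    (A : ∀ x, Matrix (l x) (m x) R) (B : ∀ x, Matrix (m x) (n x) R) :
    piKronecker A * piKronecker B = piKronecker fun x => A x * B x := by
  ext f g
  simp only [piKronecker, mul_apply, of_apply, Fintype.prod_sum, Finset.prod_mul_distrib]

theorem trace_piKronecker [DecidableEq ι] [∀ x, Fintype (m x)] (A : ∀ x, Matrix (m x) (m x) R) :
    (piKronecker A).trace = ∏ x, (A x).trace := by
  simp only [trace, diag, piKronecker, of_apply, Fintype.prod_sum]

end piKronecker

theorem sum_mul_trace_vecMulVec_mul_nonneg {𝕜 I n : Type*} [RCLike 𝕜] [Fintype I] [Fintype n]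
    {β : Matrix I I 𝕜} (hβ : β.PosSemidef) (v : I → n → 𝕜) {B : Matrix n n 𝕜}
    (hB : B.PosSemidef) :
    0 ≤ ∑ i, ∑ j, β i j * (vecMulVec (v i) (star (v j)) * B).trace := by
  set W : Matrix n I 𝕜 := of fun f i => v i f
  have hgram : ∀ i j, (vecMulVec (v i) (star (v j)) * B).trace = (Wᴴ * B * W) j i := by
    intro i j
    rw [vecMulVec_mul, trace_vecMulVec, dotProduct_comm, ← dotProduct_mulVec]
    simp only [W, dotProduct, Pi.star_apply, RCLike.star_def, mulVec, mul_sum, mul_apply,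
      conjTranspose_apply, of_apply, sum_mul, mul_assoc]
    exact Finset.sum_comm
  have hschur := hβ.hadamard (hB.conjTranspose_mul_mul_same W).transpose
  simp_rw [hgram]
  simpa only [star_one, mulVec, dotProduct, Pi.one_apply, one_mul, mul_one, hadamard_apply,
    transpose_apply]
    using hschur.dotProduct_mulVec_nonneg 1

end Matrix

section psiHat

variable [DecidableEq V] (d : V → ℕ) (h : (x : V) → I → (Fin (d x) → ℂ))

theorem prodRankOne_eq_vecMulVec (Λ : Finset V) (i j : I) :
    prodRankOne d h Λ i j =
      vecMulVec (fun f => ∏ x : Λ, h x i (f x)) (star fun g => ∏ x : Λ, h x j (g x)) := by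
  ext f g
  simp [prodRankOne, vecMulVec_apply, Finset.prod_mul_distrib]

theorem prodRankOne_eq_piKronecker (Λ : Finset V) (i j : I) :
    prodRankOne d h Λ i j = piKronecker fun x : Λ => vecMulVec (h x i) (star (h x j)) := by
  ext f g
  simp [prodRankOne, piKronecker, vecMulVec_apply]

theorem prodOp_eq_piKronecker (Λ : Finset V) (b : (x : V) → Matrix (Fin (d x)) (Fin (d x)) ℂ) :
    prodOp d Λ b = piKronecker fun x : Λ => b x :=
  rfl

theorem trace_prodRankOne_mul_prodOp (Λ : Finset V) (i j : I)
    (b : (x : V) → Matrix (Fin (d x)) (Fin (d x)) ℂ) :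
    (prodRankOne d h Λ i j * prodOp d Λ b).trace =
      ∏ x ∈ Λ, (vecMulVec (h x i) (star (h x j)) * b x).trace := by
  rw [prodRankOne_eq_piKronecker, prodOp_eq_piKronecker, piKronecker_mul, trace_piKronecker,
    Finset.prod_coe_sort Λ fun x => (vecMulVec (h x i) (star (h x j)) * b x).trace]

end psiHat

/-- if the boundary matrices `β_{Λᶜ}` are positive semidefinite and
compatible (`β_{Λᶜ;i,j} Π_{x∈Λ∖Λ₀} Tr(h_{x,i}h_{x,j}*) = β_{Λ₀ᶜ;i,j}`), then the
functionals `ψ̂_Λ` are positive and projective. -/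
theorem psiHat_positive_projective [DecidableEq V] [Fintype I] (d : V → ℕ)
    (h : (x : V) → I → (Fin (d x) → ℂ)) (β : Finset V → I → I → ℂ)
    (hpos : ∀ Λ : Finset V, (Matrix.of fun i j : I => β Λ i j).PosSemidef)
    (hcompat : ∀ (Λ₀ Λ : Finset V), Λ₀ ⊆ Λ → ∀ i j : I,
      β Λ i j * ∏ x ∈ Λ \ Λ₀, (Matrix.vecMulVec (h x i) (star (h x j))).trace =
        β Λ₀ i j) :
    (∀ (Λ : Finset V)
        (B : Matrix ((x : {y // y ∈ Λ}) → Fin (d x.1))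
          ((x : {y // y ∈ Λ}) → Fin (d x.1)) ℂ),
        B.PosSemidef → 0 ≤ psiHat d h β Λ B) ∧
    (∀ (Λ₀ Λ : Finset V), Λ₀ ⊆ Λ →
      ∀ b : (x : V) → Matrix (Fin (d x)) (Fin (d x)) ℂ,
        (∀ x ∈ Λ \ Λ₀, b x = 1) →
        psiHat d h β Λ (prodOp d Λ b) = psiHat d h β Λ₀ (prodOp d Λ₀ b)) := by
  refine ⟨fun Λ B hB => ?_, fun Λ₀ Λ hsub b hb => ?_⟩
  · simp only [psiHat, prodRankOne_eq_vecMulVec]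
    exact sum_mul_trace_vecMulVec_mul_nonneg (hpos Λ) _ hB
  · refine Finset.sum_congr rfl fun i _ => Finset.sum_congr rfl fun j _ => ?_
    have hunit : ∀ x ∈ Λ \ Λ₀, (vecMulVec (h x i) (star (h x j)) * b x).trace =
        (vecMulVec (h x i) (star (h x j))).trace := fun x hx => by rw [hb x hx, mul_one]
    rw [trace_prodRankOne_mul_prodOp, trace_prodRankOne_mul_prodOp, ← Finset.prod_sdiff hsub,
      Finset.prod_congr rfl hunit, ← mul_assoc, hcompat Λ₀ Λ hsub]
end
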